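/- Let P(T) ∈ 𝒪_E[[T]] be a power series with zero constant term whose reduction modulo 𝔪_E equals T^q. Regard 𝒪_E[[T]] as an algebra over 𝒪_E[[S]] via the 𝒪_E-algebra homomorphism 𝒪_E[[S]] → 𝒪_E[[T]] sending S to P(T) (formal substitution). Then 𝒪_E[[T]] is a free 𝒪_E[[S]]-module of rank q; in fact 1, T, T², …, T^{q−1} is a basis. -/

import Mathlib

/-!
Write `Φ_P(g) = ∑_{i<q} g_i(P)·Tⁱ` (`sumCompMulXPow P q`). For `P = T^q` the map `Φ_P` is
bijective: `g_i` collects the coefficients of `f` in the degrees `≡ i mod q`. As `P ≡ T^q` modulo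
`𝔪_E` and the norms of elements of `𝔪_E` are bounded by some `ρ < 1` (compactness of the
ultrametric open unit ball), `Φ_{T^q} - Φ_P` multiplies a bound on the coefficients by `ρ`. So
`Φ_P` differs from the bijection `Φ_{T^q}` by a `ρ`-contraction: injectivity follows by iterating
this estimate, surjectivity by successive approximation, the corrections converging
coefficientwise because `𝒪_E` is complete.
-/

open PowerSeries

/-- Formal substitution `f(g)` of a power series `g` with zero constant term into a power
series `f`. -/
noncomputable def PowerSeries.comp {R : Type*} [CommRing R] (f g : PowerSeries R) :
    PowerSeries R :=
  PowerSeries.mk fun n => ∑ k ∈ Finset.range (n + 1), coeff k f * coeff n (g ^ k)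

/-- The ring of integers of an ultrametric normed field: elements of norm at most `1`. -/
noncomputable def ringOfIntegers (E : Type*) [NormedField E] [IsUltrametricDist E] :
    Subring E where
  carrier := {x | ‖x‖ ≤ 1}
  mul_mem' := fun {a b} ha hb => by
    simpa [norm_mul] using mul_le_one₀ ha (norm_nonneg _) hb
  one_mem' := by simp
  add_mem' := fun {a b} ha hb =>
    le_trans (IsUltrametricDist.norm_add_le_max a b) (max_le ha hb)
  zero_mem' := by simp
  neg_mem' := fun {a} ha => by simpa using ha

/-- The maximal ideal of the ring of integers: elements of norm less than `1`. -/
noncomputable def maxIdeal (E : Type*) [NormedField E] [IsUltrametricDist E] :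
    Ideal (ringOfIntegers E) where
  carrier := {x | ‖(x : E)‖ < 1}
  add_mem' := fun {a b} ha hb =>
    lt_of_le_of_lt (IsUltrametricDist.norm_add_le_max (a : E) (b : E)) (max_lt ha hb)
  zero_mem' := by simp
  smul_mem' := fun c x hx => by
    have hc : ‖(c : E)‖ ≤ 1 := c.2
    calc ‖((c • x : ringOfIntegers E) : E)‖ = ‖(c : E)‖ * ‖(x : E)‖ := by
          simp [norm_mul]
      _ ≤ 1 * ‖(x : E)‖ := by gcongr
      _ < 1 := by simpa using hx

open Finset

section RingOfIntegers

variable {E : Type*} [NormedField E] [IsUltrametricDist E]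

lemma ringOfIntegers.norm_le_one (x : ringOfIntegers E) : ‖x‖ ≤ 1 :=
  x.2

instance [CompleteSpace E] : CompleteSpace (ringOfIntegers E) :=
  (isClosed_le continuous_norm continuous_const).completeSpace_coe

end RingOfIntegers

namespace PowerSeries

section Decomposition

variable {R : Type*} [CommRing R]

lemma coeff_comp (f P : R⟦X⟧) (n : ℕ) :
    coeff n (f.comp P) = ∑ k ∈ range (n + 1), coeff k f * coeff n (P ^ k) :=
  coeff_mk _ _

lemma zero_comp (P : R⟦X⟧) : (0 : R⟦X⟧).comp P = 0 := by
  ext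
  simp [coeff_comp]

lemma add_comp (f g P : R⟦X⟧) : (f + g).comp P = f.comp P + g.comp P := by
  ext
  simp [coeff_comp, add_mul, sum_add_distrib]

lemma comp_eq_subst {P : R⟦X⟧} (hP : constantCoeff P = 0) (f : R⟦X⟧) :
    f.comp P = f.subst P := by
  obtain ⟨Q, rfl⟩ := X_dvd_iff.mpr hP
  ext n
  rw [coeff_comp, coeff_subst' (HasSubst.of_constantCoeff_zero hP),
    finsum_eq_sum_of_support_subset _ (s := range (n + 1))]
  · simp
  · intro k hk
    by_contra hkn
    simp_all [mul_pow, coeff_X_pow_mul']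

lemma coeff_comp_X_pow {q : ℕ} (hq : q ≠ 0) (g : R⟦X⟧) (n : ℕ) :
    coeff n (g.comp (X ^ q)) = if q ∣ n then coeff (n / q) g else 0 := by
  rw [comp_eq_subst (by simp [hq]), coeff_subst_X_pow hq]
  rfl

noncomputable def sumCompMulXPow (P : R⟦X⟧) (q : ℕ) : (Fin q → R⟦X⟧) →+ R⟦X⟧ where
  toFun g := ∑ i : Fin q, (g i).comp P * X ^ (i : ℕ)
  map_zero' := by simp [zero_comp]
  map_add' g h := by simp [add_comp, add_mul, sum_add_distrib]

lemma sumCompMulXPow_apply (P : R⟦X⟧) {q : ℕ} (g : Fin q → R⟦X⟧) :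
    sumCompMulXPow P q g = ∑ i : Fin q, (g i).comp P * X ^ (i : ℕ) :=
  rfl

noncomputable def slice (q : ℕ) (f : R⟦X⟧) (i : Fin q) : R⟦X⟧ :=
  mk fun m => coeff (m * q + i) f

lemma coeff_slice (q : ℕ) (f : R⟦X⟧) (i : Fin q) (m : ℕ) :
    coeff m (slice q f i) = coeff (m * q + i) f :=
  coeff_mk _ _

lemma coeff_sumCompMulXPow_X_pow {q : ℕ} (g : Fin q → R⟦X⟧) (m : ℕ) (i : Fin q) :
    coeff (m * q + i) (sumCompMulXPow (X ^ q) q g) = coeff m (g i) := by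
  have hq : q ≠ 0 := i.pos.ne'
  rw [sumCompMulXPow_apply, map_sum, sum_eq_single i]
  · rw [coeff_mul_X_pow, coeff_comp_X_pow hq, if_pos (dvd_mul_left q m),
      Nat.mul_div_cancel _ i.pos]
  · intro j _ hji
    rw [coeff_mul_X_pow', coeff_comp_X_pow hq]
    split_ifs with hj hdvd
    · obtain ⟨t, ht⟩ := hdvd
      have hmod := congrArg (· % q) (show m * q + i = q * t + j by omega)
      simp [Nat.mod_eq_of_lt, Nat.add_mod] at hmod
      exact absurd (Fin.ext hmod.symm) hji
    · rfl
    · rfl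
  · simp

lemma slice_sumCompMulXPow_X_pow {q : ℕ} (g : Fin q → R⟦X⟧) :
    slice q (sumCompMulXPow (X ^ q) q g) = g := by
  ext i m
  rw [coeff_slice, coeff_sumCompMulXPow_X_pow]

lemma sumCompMulXPow_X_pow_slice {q : ℕ} (hq : 0 < q) (f : R⟦X⟧) :
    sumCompMulXPow (X ^ q) q (slice q f) = f := by
  ext n
  have := coeff_sumCompMulXPow_X_pow (slice q f) (n / q) ⟨n % q, Nat.mod_lt n hq⟩
  rwa [coeff_slice, Nat.div_add_mod'] at this

end Decomposition

section Normed

variable {R : Type*} [NormedCommRing R]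

def BddCoeff (c : ℝ) (f : R⟦X⟧) : Prop :=
  ∀ n, ‖coeff n f‖ ≤ c

namespace BddCoeff

variable {c : ℝ} {f g : R⟦X⟧}

lemma neg (hf : BddCoeff c f) : BddCoeff c (-f) :=
  fun n => by simpa using hf n

lemma mul_X_pow (hc : 0 ≤ c) (hf : BddCoeff c f) (k : ℕ) : BddCoeff c (f * X ^ k) := by
  intro n
  rw [coeff_mul_X_pow']
  split_ifs
  · exact hf _
  · simpa using hc

lemma slice (hf : BddCoeff c f) (q : ℕ) (i : Fin q) : BddCoeff c (slice q f i) :=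
  fun m => by simpa only [coeff_slice] using hf _

variable [IsUltrametricDist R]

lemma add (hf : BddCoeff c f) (hg : BddCoeff c g) : BddCoeff c (f + g) :=
  fun n => by
    rw [map_add]
    exact (IsUltrametricDist.norm_add_le_max _ _).trans (max_le (hf n) (hg n))

lemma sub (hf : BddCoeff c f) (hg : BddCoeff c g) : BddCoeff c (f - g) := by
  simpa only [sub_eq_add_neg] using hf.add hg.neg

lemma sum {ι : Type*} {s : Finset ι} {f : ι → R⟦X⟧} (hc : 0 ≤ c)
    (hf : ∀ i ∈ s, BddCoeff c (f i)) : BddCoeff c (∑ i ∈ s, f i) :=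
  fun n => by
    rw [map_sum]
    exact IsUltrametricDist.norm_sum_le_of_forall_le_of_nonneg hc fun i hi => hf i hi n

lemma mul {a b : ℝ} (ha : 0 ≤ a) (hb : 0 ≤ b) (hf : BddCoeff a f) (hg : BddCoeff b g) :
    BddCoeff (a * b) (f * g) :=
  fun n => by
    rw [coeff_mul]
    exact IsUltrametricDist.norm_sum_le_of_forall_le_of_nonneg (mul_nonneg ha hb) fun _ _ =>
      (norm_mul_le _ _).trans (mul_le_mul (hf _) (hg _) (norm_nonneg _) ha)

end BddCoeff

lemma eq_zero_of_forall_bddCoeff_pow {ρ : ℝ} (hρ0 : 0 ≤ ρ) (hρ1 : ρ < 1) {f : R⟦X⟧}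
    (hf : ∀ K, BddCoeff (ρ ^ K) f) : f = 0 :=
  ext fun n => norm_le_zero_iff.mp <|
    ge_of_tendsto' (tendsto_pow_atTop_nhds_zero_of_lt_one hρ0 hρ1) fun K => hf K n

lemma exists_bddCoeff_sub_sum_range [IsUltrametricDist R] [CompleteSpace R] {ρ : ℝ}
    (hρ0 : 0 ≤ ρ) (hρ1 : ρ < 1) {h : ℕ → R⟦X⟧} (hh : ∀ k, BddCoeff (ρ ^ k) (h k)) :
    ∃ G : R⟦X⟧, ∀ K, BddCoeff (ρ ^ K) (G - ∑ k ∈ range K, h k) := by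
  have hsum (m : ℕ) : Summable fun k => coeff m (h k) :=
    .of_norm_bounded (summable_geometric_of_lt_one hρ0 hρ1) fun k => hh k m
  refine ⟨mk fun m => ∑' k, coeff m (h k), fun K m => ?_⟩
  rw [map_sub, map_sum, coeff_mk, ← (hsum m).sum_add_tsum_nat_add K, add_sub_cancel_left]
  exact IsUltrametricDist.norm_tsum_le_of_forall_le_of_nonneg (pow_nonneg hρ0 K) fun k =>
    (hh (k + K) m).trans (pow_le_pow_of_le_one hρ0 hρ1.le (Nat.le_add_left K k))

end Normed

section Contraction

variable {E : Type*} [NormedField E] [IsUltrametricDist E] {q : ℕ} {c ρ : ℝ}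
  {f P : (ringOfIntegers E)⟦X⟧}

lemma bddCoeff_one (f : (ringOfIntegers E)⟦X⟧) : BddCoeff 1 f :=
  fun _ => ringOfIntegers.norm_le_one _

lemma BddCoeff.comp (hc : 0 ≤ c) (hf : BddCoeff c f) (P : (ringOfIntegers E)⟦X⟧) :
    BddCoeff c (f.comp P) :=
  fun n => by
    rw [coeff_comp]
    exact IsUltrametricDist.norm_sum_le_of_forall_le_of_nonneg hc fun k _ =>
      (norm_mul_le _ _).trans <| by
        simpa using mul_le_mul (hf k) (ringOfIntegers.norm_le_one _) (norm_nonneg _) hc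

lemma BddCoeff.comp_sub_comp (hc : 0 ≤ c) (hρ : 0 ≤ ρ) (hf : BddCoeff c f)
    {P Q : (ringOfIntegers E)⟦X⟧} (hPQ : BddCoeff ρ (P - Q)) :
    BddCoeff (c * ρ) (f.comp P - f.comp Q) :=
  fun n => by
    rw [map_sub, coeff_comp, coeff_comp, ← sum_sub_distrib]
    refine IsUltrametricDist.norm_sum_le_of_forall_le_of_nonneg (mul_nonneg hc hρ) fun k _ => ?_
    rw [← mul_sub, ← map_sub, ← geom_sum₂_mul]
    have hgeom :=
      (bddCoeff_one (∑ i ∈ range k, P ^ i * Q ^ (k - 1 - i))).mul zero_le_one hρ hPQ n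
    exact (norm_mul_le _ _).trans (mul_le_mul (hf k) (by simpa using hgeom) (norm_nonneg _) hc)

lemma BddCoeff.sumCompMulXPow (hc : 0 ≤ c) {g : Fin q → (ringOfIntegers E)⟦X⟧}
    (hg : ∀ i, BddCoeff c (g i)) : BddCoeff c (sumCompMulXPow P q g) :=
  BddCoeff.sum hc fun i _ => ((hg i).comp hc P).mul_X_pow hc i

lemma bddCoeff_sumCompMulXPow_X_pow_sub (hc : 0 ≤ c) (hρ : 0 ≤ ρ)
    (hP : BddCoeff ρ (P - X ^ q))
    {g : Fin q → (ringOfIntegers E)⟦X⟧} (hg : ∀ i, BddCoeff c (g i)) :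
    BddCoeff (c * ρ) (sumCompMulXPow (X ^ q) q g - sumCompMulXPow P q g) := by
  rw [sumCompMulXPow_apply, sumCompMulXPow_apply, ← sum_sub_distrib]
  refine BddCoeff.sum (mul_nonneg hc hρ) fun i _ => ?_
  rw [← sub_mul]
  exact ((hg i).comp_sub_comp hc hρ (neg_sub P (X ^ q) ▸ hP.neg)).mul_X_pow (mul_nonneg hc hρ) i

lemma bddCoeff_sub_sumCompMulXPow_slice (hq : 0 < q) (hc : 0 ≤ c) (hρ : 0 ≤ ρ)
    (hP : BddCoeff ρ (P - X ^ q)) (hf : BddCoeff c f) :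
    BddCoeff (c * ρ) (f - sumCompMulXPow P q (slice q f)) := by
  have := bddCoeff_sumCompMulXPow_X_pow_sub hc hρ hP (hf.slice q)
  rwa [sumCompMulXPow_X_pow_slice hq] at this

lemma sumCompMulXPow_injective (hρ0 : 0 ≤ ρ) (hρ1 : ρ < 1) (hP : BddCoeff ρ (P - X ^ q)) :
    Function.Injective (sumCompMulXPow P q) := by
  refine (injective_iff_map_eq_zero _).mpr fun g hg => ?_
  have hbdd (K : ℕ) : ∀ i, BddCoeff (ρ ^ K) (g i) := by
    induction K with
    | zero => simpa using fun i => bddCoeff_one (g i)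
    | succ K ih =>
      have := bddCoeff_sumCompMulXPow_X_pow_sub (pow_nonneg hρ0 K) hρ0 hP ih
      rw [hg, sub_zero, ← pow_succ] at this
      intro i
      simpa only [slice_sumCompMulXPow_X_pow] using this.slice q i
  exact funext fun i => eq_zero_of_forall_bddCoeff_pow hρ0 hρ1 fun K => hbdd K i

lemma sumCompMulXPow_surjective [CompleteSpace E] (hq : 0 < q) (hρ0 : 0 ≤ ρ) (hρ1 : ρ < 1)
    (hP : BddCoeff ρ (P - X ^ q)) : Function.Surjective (sumCompMulXPow P q) := by
  intro f
  set r : ℕ → (ringOfIntegers E)⟦X⟧ :=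
    fun k => (fun x => x - sumCompMulXPow P q (slice q x))^[k] f
  have hr_succ (k : ℕ) : r (k + 1) = r k - sumCompMulXPow P q (slice q (r k)) :=
    Function.iterate_succ_apply' _ _ _
  have hr (k : ℕ) : BddCoeff (ρ ^ k) (r k) := by
    induction k with
    | zero => simpa [r] using bddCoeff_one f
    | succ k ih =>
      rw [hr_succ, pow_succ]
      exact bddCoeff_sub_sumCompMulXPow_slice hq (pow_nonneg hρ0 k) hρ0 hP ih
  have htel (K : ℕ) : f = r K + sumCompMulXPow P q (∑ k ∈ range K, slice q (r k)) := by
    induction K with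
    | zero => simp [r]
    | succ K ih =>
      rw [hr_succ, sum_range_succ, map_add]
      linear_combination ih
  choose G hG using fun i => exists_bddCoeff_sub_sum_range hρ0 hρ1 fun k => (hr k).slice q i
  refine ⟨G, eq_of_sub_eq_zero (eq_zero_of_forall_bddCoeff_pow hρ0 hρ1 fun K => ?_)⟩
  have hsplit : sumCompMulXPow P q G - f =
      sumCompMulXPow P q (G - ∑ k ∈ range K, slice q (r k)) - r K := by
    rw [map_sub]
    linear_combination -htel K
  rw [hsplit]
  refine (BddCoeff.sumCompMulXPow (pow_nonneg hρ0 K) fun i => ?_).sub (hr K)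
  simpa [Finset.sum_apply] using hG i K

end Contraction

end PowerSeries

lemma exists_forall_norm_le_of_norm_lt {F : Type*} [SeminormedAddCommGroup F]
    [IsUltrametricDist F] [ProperSpace F] {r : ℝ} (hr : 0 < r) :
    ∃ x₀ : F, ‖x₀‖ < r ∧ ∀ x : F, ‖x‖ < r → ‖x‖ ≤ ‖x₀‖ := by
  have hK : IsCompact (Metric.ball (0 : F) r) :=
    Metric.isCompact_of_isClosed_isBounded (IsUltrametricDist.isClosed_ball 0 r)
      Metric.isBounded_ball
  obtain ⟨x₀, hx₀, hmax⟩ :=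
    hK.exists_isMaxOn ⟨0, Metric.mem_ball_self hr⟩ continuous_norm.continuousOn
  exact ⟨x₀, mem_ball_zero_iff.mp hx₀, fun x hx => hmax (mem_ball_zero_iff.mpr hx)⟩

theorem free_of_rank_q_over_subst_general
    {p : ℕ} [Fact p.Prime] (E : Type*) [NormedField E] [IsUltrametricDist E]
    [NormedAlgebra ℚ_[p] E] [FiniteDimensional ℚ_[p] E]
    (q : ℕ)
    (P : PowerSeries (ringOfIntegers E))
    (hP0 : constantCoeff P = 0)
    (hPred : ∀ n, coeff n (P - X ^ q) ∈ maxIdeal E) :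
    ∀ f : PowerSeries (ringOfIntegers E),
      ∃! g : Fin q → PowerSeries (ringOfIntegers E),
        f = ∑ i : Fin q, (g i).comp P * X ^ (i : ℕ) := by
  have : ProperSpace E := FiniteDimensional.proper ℚ_[p] E
  have hq : 0 < q := by
    refine Nat.pos_of_ne_zero fun hq => ?_
    have h := hPred 0
    simp [hq, hP0, maxIdeal] at h
  obtain ⟨x₀, hx₀, hmax⟩ := exists_forall_norm_le_of_norm_lt (F := E) one_pos
  have hP : BddCoeff ‖x₀‖ (P - X ^ q) := fun n => hmax _ (hPred n)
  have hbij : Function.Bijective (sumCompMulXPow P q) :=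
    ⟨sumCompMulXPow_injective (norm_nonneg _) hx₀ hP,
      sumCompMulXPow_surjective hq (norm_nonneg _) hx₀ hP⟩
  intro f
  simpa only [eq_comm, sumCompMulXPow_apply] using hbij.existsUnique f

/-- Let `P ∈ 𝒪_E[[T]]` have zero constant term and reduction `T^q` modulo
`𝔪_E`. Viewing `𝒪_E[[T]]` as an `𝒪_E[[S]]`-algebra via `S ↦ P(T)`, the ring `𝒪_E[[T]]` is a
free `𝒪_E[[S]]`-module of rank `q` with basis `1, T, …, T^{q-1}`: every `f ∈ 𝒪_E[[T]]` has a
unique expression `f = Σ_{i<q} g_i(P(T))·T^i` with `g_i ∈ 𝒪_E[[S]]`. -/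
theorem free_of_rank_q_over_subst
    {p : ℕ} [Fact p.Prime] (E : Type*) [NormedField E] [IsUltrametricDist E]
    [NormedAlgebra ℚ_[p] E] [FiniteDimensional ℚ_[p] E]
    (q : ℕ) (hq : q = Nat.card ((ringOfIntegers E) ⧸ (maxIdeal E)))
    (P : PowerSeries (ringOfIntegers E))
    (hP0 : constantCoeff P = 0)
    (hPred : ∀ n, coeff n (P - X ^ q) ∈ maxIdeal E) :
    ∀ f : PowerSeries (ringOfIntegers E),
      ∃! g : Fin q → PowerSeries (ringOfIntegers E),
        f = ∑ i : Fin q, (g i).comp P * X ^ (i : ℕ) :=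
  free_of_rank_q_over_subst_general (p := p) E q P hP0 hPred
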